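/- arXiv:2604.09079 — 2 statements merged into one kernel-verified Lean document; each statement's English description precedes it below -/
import Mathlib

section
/- Consider the error system ẋ̃ = -(c₁I + L)x̃ - Ē Ẑ(t) w̃, ẇ̃ = Ẑ(t) Ē^T x̃ with L symmetric and c₁ + λ_min(L) > 0. Then every solution is uniformly bounded: |x̃(t)|² + |w̃(t)|² ≤ |x̃(t₀)|² + |w̃(t₀)|² for all t ≥ t₀, and ∫_{t₀}^∞ |x̃(s)|² ds ≤ (|x̃(t₀)|² + |w̃(t₀)|²)/(2(c₁+λ_min(L))). -/
/-!
The energy `V = |x̃|² + |w̃|²` is a Lyapunov function: the coupling terms `-Ē Ẑ w̃` and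
`Ẑ Ēᵀ x̃` are adjoint to each other and cancel in `V̇`, leaving
`V̇ = -2 x̃ᵀ (c₁ I + L) x̃ ≤ -2 (c₁ + λ_min(L)) |x̃|²`. Integrating,
`V(t) + 2 (c₁ + λ_min(L)) ∫_{t₀}^t |x̃|² ≤ V(t₀)`, which gives both bounds since `V ≥ 0`.
-/

open Matrix MeasureTheory Set

theorem Matrix.IsHermitian.mul_dotProduct_self_le_dotProduct_mulVec {n : Type*} [Fintype n]
    [DecidableEq n] {L : Matrix n n ℝ} (hL : L.IsHermitian) {lam : ℝ}
    (hlam : ∀ (μ : ℝ) (v : n → ℝ), v ≠ 0 → L *ᵥ v = μ • v → lam ≤ μ) (v : n → ℝ) :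
    lam * (v ⬝ᵥ v) ≤ v ⬝ᵥ (L *ᵥ v) := by
  have hA : (L - lam • 1).IsHermitian := hL.sub (isHermitian_one.smul (IsSelfAdjoint.all lam))
  have hpsd : (L - lam • 1).PosSemidef := by
    refine hA.posSemidef_iff_eigenvalues_nonneg.mpr fun i => ?_
    -- an eigenvector of `L - lam • 1` is an eigenvector of `L`, with eigenvalue shifted by `lam`
    have hu : ⇑(hA.eigenvectorBasis i) ≠ 0 := by
      simpa using hA.eigenvectorBasis.orthonormal.ne_zero i
    have hLu := hA.mulVec_eigenvectorBasis i
    rw [sub_mulVec, smul_mulVec, one_mulVec, sub_eq_iff_eq_add, ← add_smul] at hLu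
    simpa using hlam _ _ hu hLu
  have h := hpsd.dotProduct_mulVec_nonneg v
  simp only [star_trivial, sub_mulVec, smul_mulVec, one_mulVec, dotProduct_sub,
    dotProduct_smul, smul_eq_mul] at h
  linarith

section EnergyIdentity

variable {ι κ : Type*} [Fintype ι] [Fintype κ]

theorem sum_sq_eq_dotProduct_self (v : ι → ℝ) : ∑ i, v i ^ 2 = v ⬝ᵥ v := by
  simp [dotProduct, sq]

theorem HasDerivAt.sum_sq {x : ℝ → ι → ℝ} {x' : ι → ℝ} {t : ℝ} (hx : HasDerivAt x x' t) :
    HasDerivAt (fun s => ∑ i, x s i ^ 2) (2 * (x t ⬝ᵥ x')) t := by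
  have := HasDerivAt.fun_sum fun i (_ : i ∈ Finset.univ) => ((hasDerivAt_pi.mp hx) i).fun_pow 2
  refine this.congr_deriv ?_
  simp only [Nat.cast_ofNat, Nat.add_one_sub_one, pow_one, dotProduct, Finset.mul_sum]
  ring_nf

theorem hasDerivAt_energy_of_skew_coupling {A : Matrix ι ι ℝ} {B : Matrix ι κ ℝ}
    {x : ℝ → ι → ℝ} {w : ℝ → κ → ℝ} {t : ℝ}
    (hx : HasDerivAt x (-(A *ᵥ x t) - B *ᵥ w t) t) (hw : HasDerivAt w (Bᵀ *ᵥ x t) t) :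
    HasDerivAt (fun s => ∑ i, x s i ^ 2 + ∑ j, w s j ^ 2) (-(2 * (x t ⬝ᵥ A *ᵥ x t))) t := by
  refine (hx.sum_sq.add hw.sum_sq).congr_deriv ?_
  rw [dotProduct_sub, dotProduct_neg, dotProduct_mulVec (x t) B, mulVec_transpose,
    dotProduct_comm (w t)]
  ring

end EnergyIdentity

theorem add_mul_intervalIntegral_le_of_hasDerivAt {V D f : ℝ → ℝ} {a b k : ℝ} (hab : a ≤ b)
    (hV : ∀ t ∈ Icc a b, HasDerivAt V (D t) t) (hf : ContinuousOn f (Icc a b))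
    (hD : ∀ t ∈ Ioo a b, D t ≤ -(k * f t)) :
    V b + k * ∫ s in a..b, f s ≤ V a := by
  have := intervalIntegral.sub_le_integral_of_hasDeriv_right_of_le (φ := fun s => -(k * f s)) hab
    (fun t ht => (hV t ht).continuousAt.continuousWithinAt)
    (fun t ht => (hV t (Ioo_subset_Icc_self ht)).hasDerivWithinAt)
    (continuousOn_const.mul hf).neg.integrableOn_Icc hD
  rw [intervalIntegral.integral_neg, intervalIntegral.integral_const_mul] at this
  linarith

theorem setIntegral_Ioi_le_of_forall_intervalIntegral_le {f : ℝ → ℝ} {a C : ℝ}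
    (h : ∀ b, a ≤ b → ∫ s in a..b, f s ≤ C) : ∫ s in Ioi a, f s ≤ C := by
  -- without integrability the integral is the junk value `0`, and `0 ≤ C` is the case `b = a`
  by_cases hf : IntegrableOn f (Ioi a)
  · exact le_of_tendsto (intervalIntegral_tendsto_integral_Ioi a hf Filter.tendsto_id)
      (Filter.eventually_atTop.mpr ⟨a, h⟩)
  · simpa [integral_undef hf] using h a le_rfl

theorem error_system_uniform_boundedness_general (N M : ℕ) (c₁ lam : ℝ)
    (L : Matrix (Fin N) (Fin N) ℝ) (hsym : Lᵀ = L)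
    (hlam : IsLeast {μ : ℝ | ∃ v : Fin N → ℝ, v ≠ 0 ∧ L *ᵥ v = μ • v} lam)
    (hc : 0 < c₁ + lam)
    (E : Matrix (Fin N) (Fin M) ℝ) (z : ℝ → Fin M → ℝ)
    (t₀ : ℝ) (x : ℝ → Fin N → ℝ) (w : ℝ → Fin M → ℝ)
    (hx : ∀ t, t₀ ≤ t → HasDerivAt x
      (-((c₁ • (1 : Matrix (Fin N) (Fin N) ℝ) + L) *ᵥ x t)
        - (E * Matrix.diagonal (z t)) *ᵥ w t) t)
    (hw : ∀ t, t₀ ≤ t → HasDerivAt w ((Matrix.diagonal (z t) * Eᵀ) *ᵥ x t) t) :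
    (∀ t, t₀ ≤ t →
      ∑ i, x t i ^ 2 + ∑ i, w t i ^ 2 ≤ ∑ i, x t₀ i ^ 2 + ∑ i, w t₀ i ^ 2) ∧
    (∫ sᵤ in Set.Ioi t₀, (∑ i, x sᵤ i ^ 2)) ≤
      (∑ i, x t₀ i ^ 2 + ∑ i, w t₀ i ^ 2) / (2 * (c₁ + lam)) := by
  set f : ℝ → ℝ := fun t => ∑ i, x t i ^ 2
  set V : ℝ → ℝ := fun t => f t + ∑ i, w t i ^ 2
  have hL : L.IsHermitian := by rwa [IsHermitian, conjTranspose_eq_transpose_of_trivial]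
  have hV : ∀ t, t₀ ≤ t →
      HasDerivAt V (-(2 * (x t ⬝ᵥ (c₁ • 1 + L) *ᵥ x t))) t := fun t ht =>
    hasDerivAt_energy_of_skew_coupling (hx t ht)
      (by simpa only [transpose_mul, diagonal_transpose] using hw t ht)
  have hdiss : ∀ t, -(2 * (x t ⬝ᵥ (c₁ • 1 + L) *ᵥ x t)) ≤ -(2 * (c₁ + lam) * f t) := by
    intro t
    have := hL.mul_dotProduct_self_le_dotProduct_mulVec
      (fun μ v hv hμ => hlam.2 ⟨v, hv, hμ⟩) (x t)
    simp only [f, sum_sq_eq_dotProduct_self, add_mulVec, smul_mulVec, one_mulVec,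
      dotProduct_add, dotProduct_smul, smul_eq_mul]
    linarith
  have hf0 : ∀ t, 0 ≤ f t := fun t => Finset.sum_nonneg fun i _ => sq_nonneg _
  have hW0 : ∀ t, 0 ≤ ∑ i, w t i ^ 2 := fun t => Finset.sum_nonneg fun i _ => sq_nonneg _
  have hdecay : ∀ t, t₀ ≤ t → V t + 2 * (c₁ + lam) * ∫ s in t₀..t, f s ≤ V t₀ :=
    fun t ht => add_mul_intervalIntegral_le_of_hasDerivAt ht
      (fun s hs => hV s hs.1)
      (fun s hs => (hx s hs.1).sum_sq.continuousAt.continuousWithinAt)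
      (fun s _ => hdiss s)
  refine ⟨fun t ht => ?_, setIntegral_Ioi_le_of_forall_intervalIntegral_le fun t ht => ?_⟩
  · have : 0 ≤ ∫ s in t₀..t, f s := intervalIntegral.integral_nonneg ht fun s _ => hf0 s
    linarith [hdecay t ht, mul_nonneg (by linarith : (0 : ℝ) ≤ 2 * (c₁ + lam)) this]
  · rw [le_div_iff₀' (by linarith)]
    linarith [hdecay t ht, hf0 t, hW0 t]

/-- For the error system `ẋ̃ = -(c₁I + L)x̃ - Ē Ẑ(t) w̃`, `ẇ̃ = Ẑ(t) Ēᵀ x̃` with `L`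
symmetric, `Ẑ(t)` diagonal and continuous, and `c₁ + λ_min(L) > 0`, every solution is
uniformly bounded: `|x̃(t)|² + |w̃(t)|² ≤ |x̃(t₀)|² + |w̃(t₀)|²` for all `t ≥ t₀`, and
`∫_{t₀}^∞ |x̃(s)|² ds ≤ (|x̃(t₀)|² + |w̃(t₀)|²)/(2(c₁ + λ_min(L)))`. -/
theorem error_system_uniform_boundedness (N M : ℕ) (c₁ lam : ℝ)
    (L : Matrix (Fin N) (Fin N) ℝ) (hsym : Lᵀ = L)
    (hlam : IsLeast {μ : ℝ | ∃ v : Fin N → ℝ, v ≠ 0 ∧ L *ᵥ v = μ • v} lam)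
    (hc : 0 < c₁ + lam)
    (E : Matrix (Fin N) (Fin M) ℝ) (z : ℝ → Fin M → ℝ) (hz : Continuous z)
    (t₀ : ℝ) (x : ℝ → Fin N → ℝ) (w : ℝ → Fin M → ℝ)
    (hx : ∀ t, t₀ ≤ t → HasDerivAt x
      (-((c₁ • (1 : Matrix (Fin N) (Fin N) ℝ) + L) *ᵥ x t)
        - (E * Matrix.diagonal (z t)) *ᵥ w t) t)
    (hw : ∀ t, t₀ ≤ t → HasDerivAt w ((Matrix.diagonal (z t) * Eᵀ) *ᵥ x t) t) :
    (∀ t, t₀ ≤ t →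
      ∑ i, x t i ^ 2 + ∑ i, w t i ^ 2 ≤ ∑ i, x t₀ i ^ 2 + ∑ i, w t₀ i ^ 2) ∧
    (∫ sᵤ in Set.Ioi t₀, (∑ i, x sᵤ i ^ 2)) ≤
      (∑ i, x t₀ i ^ 2 + ∑ i, w t₀ i ^ 2) / (2 * (c₁ + lam)) :=
  error_system_uniform_boundedness_general N M c₁ lam L hsym hlam hc E z t₀ x w hx hw
end

section
/- Let Ẑ : ℝ → ℝ^{N×M} be continuous with |Ẑ(τ)| ≤ b_ρ for all τ, and suppose there exist T, μ > 0 such that ∫_t^{t+T} |Ẑ(τ)|² dτ ≥ μ for all t. Then the function V₃(t) = -∫_t^∞ e^{t-τ} |Ẑ(τ)|² dτ satisfies -b_ρ² ≤ V₃(t) ≤ -e^{-T} μ for all t. -/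
open Matrix BigOperators MeasureTheory

attribute [local instance] Matrix.frobeniusNormedAddCommGroup

/-- If `Ẑ : ℝ → ℝ^{N×M}` is continuous with `‖Ẑ(τ)‖ ≤ b_ρ` and persistently exciting,
`∫_t^{t+T} ‖Ẑ(τ)‖² dτ ≥ μ` for all `t`, then
`V₃(t) = -∫_t^∞ e^{t-τ} ‖Ẑ(τ)‖² dτ` satisfies `-b_ρ² ≤ V₃(t) ≤ -e^{-T} μ`. -/
theorem V3_two_sided_bounds (N M : ℕ) (bρ T μ : ℝ) (hT : 0 < T) (hμ : 0 < μ)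
    (Z : ℝ → Matrix (Fin N) (Fin M) ℝ) (hZc : Continuous Z)
    (hZb : ∀ τ, ‖Z τ‖ ≤ bρ)
    (hPE : ∀ t : ℝ, μ ≤ ∫ τ in t..(t + T), ‖Z τ‖ ^ 2)
    (V₃ : ℝ → ℝ)
    (hV₃ : ∀ t, V₃ t = -∫ τ in Set.Ioi t, Real.exp (t - τ) * ‖Z τ‖ ^ 2) :
    ∀ t, -bρ ^ 2 ≤ V₃ t ∧ V₃ t ≤ -(Real.exp (-T) * μ) := by
  intro t
  have hb0 : 0 ≤ bρ := le_trans (norm_nonneg _) (hZb 0)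
  set g : ℝ → ℝ := fun τ => Real.exp (t - τ) * ‖Z τ‖ ^ 2 with hg
  have hgc : Continuous g := by
    exact (Real.continuous_exp.comp (continuous_const.sub continuous_id)).mul
      ((hZc.norm).pow 2)
  have hZsq : ∀ τ, ‖Z τ‖ ^ 2 ≤ bρ ^ 2 := fun τ =>
    pow_le_pow_left₀ (norm_nonneg _) (hZb τ) 2
  have hgnn : ∀ τ, 0 ≤ g τ := fun τ =>
    mul_nonneg (Real.exp_pos _).le (sq_nonneg _)
  -- integrability of dominating function
  have hdom : IntegrableOn (fun τ => bρ ^ 2 * Real.exp (t - τ)) (Set.Ioi t) := by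
    have h1 : IntegrableOn (fun τ => Real.exp (-τ)) (Set.Ioi t) := by
      simpa using exp_neg_integrableOn_Ioi t one_pos
    have heq : (fun τ => bρ ^ 2 * Real.exp (t - τ)) =
        fun τ => bρ ^ 2 * Real.exp t * Real.exp (-τ) := by
      funext τ; rw [mul_assoc, ← Real.exp_add]; ring_nf
    rw [heq]
    exact h1.const_mul (bρ ^ 2 * Real.exp t)
  have hgi : IntegrableOn g (Set.Ioi t) := by
    refine hdom.mono' (hgc.aestronglyMeasurable.restrict) ?_
    filter_upwards with τ
    rw [Real.norm_of_nonneg (hgnn τ)]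
    exact mul_le_mul_of_nonneg_right (le_refl _) (sq_nonneg _) |>.trans
      (by rw [mul_comm]; exact mul_le_mul_of_nonneg_right (hZsq τ) (Real.exp_pos _).le)
  have hexp_int : (∫ τ in Set.Ioi t, Real.exp (t - τ)) = 1 := by
    have : (∫ τ in Set.Ioi t, Real.exp (t - τ)) =
        Real.exp t * ∫ τ in Set.Ioi t, Real.exp (-τ) := by
      rw [← integral_const_mul]
      congr 1 with τ
      rw [← Real.exp_add]; ring_nf
    rw [this, integral_exp_neg_Ioi, ← Real.exp_add]
    simp
  -- upper bound on integral
  have hub : (∫ τ in Set.Ioi t, g τ) ≤ bρ ^ 2 := by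
    have := setIntegral_mono_on hgi hdom measurableSet_Ioi
      (fun τ _ => by
        rw [mul_comm (bρ ^ 2)]
        exact mul_le_mul_of_nonneg_left (hZsq τ) (Real.exp_pos _).le)
    calc (∫ τ in Set.Ioi t, g τ) ≤ ∫ τ in Set.Ioi t, bρ ^ 2 * Real.exp (t - τ) := this
      _ = bρ ^ 2 * ∫ τ in Set.Ioi t, Real.exp (t - τ) := by rw [integral_const_mul]
      _ = bρ ^ 2 := by rw [hexp_int, mul_one]
  -- lower bound
  have hlb : Real.exp (-T) * μ ≤ ∫ τ in Set.Ioi t, g τ := by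
    have h1 : (∫ τ in Set.Ioc t (t + T), g τ) ≤ ∫ τ in Set.Ioi t, g τ := by
      refine setIntegral_mono_set hgi ?_ ?_
      · filter_upwards with τ using hgnn τ
      · filter_upwards with τ using fun h => Set.Ioc_subset_Ioi_self h
    have h2 : (∫ τ in t..(t + T), g τ) = ∫ τ in Set.Ioc t (t + T), g τ :=
      intervalIntegral.integral_of_le (by linarith)
    have h3 : (∫ τ in t..(t + T), Real.exp (-T) * ‖Z τ‖ ^ 2) ≤ ∫ τ in t..(t + T), g τ := by
      refine intervalIntegral.integral_mono_on (by linarith) ?_ ?_ ?_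
      · exact (continuous_const.mul ((hZc.norm).pow 2)).intervalIntegrable _ _
      · exact hgc.intervalIntegrable _ _
      · intro τ hτ
        simp only [Set.mem_Icc] at hτ
        exact mul_le_mul_of_nonneg_right
          (Real.exp_le_exp.mpr (by linarith [hτ.1, hτ.2])) (sq_nonneg _)
    have h4 : Real.exp (-T) * μ ≤ ∫ τ in t..(t + T), Real.exp (-T) * ‖Z τ‖ ^ 2 := by
      rw [intervalIntegral.integral_const_mul]
      exact mul_le_mul_of_nonneg_left (hPE t) (Real.exp_pos _).le
    linarith [h1, h3, h4, h2 ▸ h3]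
  refine ⟨?_, ?_⟩ <;> rw [hV₃ t]
  · linarith
  · linarith
end
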